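/- If Dᵤa is an ordinal term (i.e. Dᵤa ∈ OT) and u ≤ v ≤ ω, then Dᵥa is also an ordinal term. -/
import Mathlib


inductive PT : Type
  | D : ℕ∞ → List PT → PT

mutual
  def PT.lt : PT → PT → Prop
    | .D u a, .D v b => u < v ∨ (u = v ∧ T.lt a b)
  def T.lt : List PT → List PT → Prop
    | _, [] => False
    | [], _ :: _ => True
    | a :: as, b :: bs => PT.lt a b ∨ (a = b ∧ T.lt as bs)
end

def PT.ord : PT → ℕ∞
  | .D u _ => u

def T.ord : List PT → ℕ∞
  | [] => 0
  | a :: _ => a.ord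

mutual
  /-- `G_u` on principal terms. -/
  def PT.G : ℕ∞ → PT → Set (List PT)
    | u, .D v a => if v < u then ∅ else insert a (T.G u a)
  /-- `G_u` on general terms. -/
  def T.G : ℕ∞ → List PT → Set (List PT)
    | _, [] => ∅
    | u, a :: as => PT.G u a ∪ T.G u as
end

/-- Buchholz's set `OT` of ordinal terms (as a predicate on general terms). -/
inductive OT : List PT → Prop
  | zero : OT []
  | seq (l : List PT) : 2 ≤ l.length → (∀ p ∈ l, OT [p]) →
      l.Chain' (fun x y => PT.lt y x ∨ y = x) → OT l
  | D (u : ℕ∞) (a : List PT) : OT a → (∀ b ∈ T.G u a, T.lt b a) → OT [.D u a]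



mutual
  theorem PT.G_anti (u v : ℕ∞) (huv : u ≤ v) : ∀ p : PT, PT.G v p ⊆ PT.G u p
    | .D w a => by
      unfold PT.G
      split
      · simp
      · rename_i hwv
        have hwu : ¬ w < u := fun h => hwv (lt_of_lt_of_le h huv)
        simp only [if_neg hwu]
        exact Set.insert_subset_insert (T.G_anti u v huv a)
  theorem T.G_anti (u v : ℕ∞) (huv : u ≤ v) : ∀ l : List PT, T.G v l ⊆ T.G u l
    | [] => by unfold T.G; simp
    | a :: as => by
      unfold T.G
      exact Set.union_subset_union (PT.G_anti u v huv a) (T.G_anti u v huv as)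
end

/-- If `Dᵤa` is an ordinal term and `u ≤ v`, then `Dᵥa` is an ordinal term. -/
theorem OT_D_mono (u v : ℕ∞) (a : List PT) (h : OT [.D u a]) (huv : u ≤ v) :
    OT [.D v a] := by
  cases h with
  | seq l hl _ _ => simp at hl
  | D _ _ hOT hG =>
    exact OT.D v a hOT (fun b hb => hG b (T.G_anti u v huv a hb))
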